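/- arXiv:2305.11319 — 4 statements merged into one kernel-verified Lean document; each statement's English description precedes it below -/
import Mathlib

section
/- The risk-to-go of an admissible strategy θ and of its induced self-financing strategy ϑ (defined by ϑ_0 = θ_0 and ϑ_t = (ϑ_{t-1}^T X_t / θ_t^T X_t) θ_t) are related by R_t[ϑ_{t:T}] = (∏_{s=0}^{t-1} w_s^θ) R_t[θ_{t:T}] for all t ≥ 1, and R_0[ϑ_{0:T}] = R_0[θ_{0:T}]. -/
open MeasureTheory Finset

/-- The weight ratio `w_t^θ = (θ_t^T X_{t+1}) / (θ_{t+1}^T X_{t+1})`. -/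
noncomputable def wgt {Ω : Type*} {n : ℕ} (X θ : ℕ → Ω → Fin n → ℝ) (t : ℕ) (ω : Ω) : ℝ :=
  (∑ i, θ t ω i * X (t + 1) ω i) / (∑ i, θ (t + 1) ω i * X (t + 1) ω i)

/-- Risk-to-go with fuel. -/
noncomputable def riskToGoAux {Ω : Type*} {n : ℕ} (ρ : ℕ → (Ω → ℝ) → Ω → ℝ)
    (X θ : ℕ → Ω → Fin n → ℝ) : ℕ → ℕ → Ω → ℝ
  | 0, _ => fun _ => 0
  | k + 1, t => ρ t (fun ω =>
      (∑ i, θ t ω i * (X t ω i - X (t + 1) ω i)) +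
        wgt X θ t ω * riskToGoAux ρ X θ k (t + 1) ω)

/-- The risk-to-go process: `R_{T+1} = 0` and
`R_t[θ_{t:T}] = ρ_t(θ_t^T ΔX_t + w_t^θ R_{t+1}[θ_{t+1:T}])`. -/
noncomputable def riskToGo {Ω : Type*} {n : ℕ} (ρ : ℕ → (Ω → ℝ) → Ω → ℝ)
    (X θ : ℕ → Ω → Fin n → ℝ) (T t : ℕ) : Ω → ℝ :=
  riskToGoAux ρ X θ (T + 1 - t) t

/-- The induced self-financing strategy `ϑ_t = (∏_{s<t} w_s^θ) θ_t`. -/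
noncomputable def induced {Ω : Type*} {n : ℕ} (X θ : ℕ → Ω → Fin n → ℝ)
    (t : ℕ) (ω : Ω) (i : Fin n) : ℝ :=
  (∏ s ∈ Finset.range t, wgt X θ s ω) * θ t ω i

/-- The risk-to-go of a strategy `θ` and of its induced self-financing strategy `ϑ`
are related by `R_0[ϑ] = R_0[θ]` and `R_t[ϑ_{t:T}] = (∏_{s<t} w_s^θ) R_t[θ_{t:T}]`
for `1 ≤ t ≤ T`. -/
theorem stmt6 {Ω : Type*} {m : MeasurableSpace Ω} {n T : ℕ}
    (ℱ : ℕ → MeasurableSpace Ω) (hℱ : Monotone ℱ)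
    (ρ : ℕ → (Ω → ℝ) → Ω → ℝ)
    (hρhom : ∀ (s : ℕ) (lam : Ω → ℝ), Measurable[ℱ s] lam →
      (∃ M : ℝ, ∀ ω, lam ω ≤ M) → (∀ ω, 0 < lam ω) →
      ∀ Z : Ω → ℝ, ρ s (fun ω => lam ω * Z ω) = fun ω => lam ω * ρ s Z ω)
    (X θ : ℕ → Ω → Fin n → ℝ)
    (hθpos : ∀ s ω i, 0 < θ s ω i) (hXpos : ∀ s ω i, 0 < X s ω i)
    -- adaptedness of prices and strategy
    (hXad : ∀ s, Measurable[ℱ s] (X s)) (hθad : ∀ s, Measurable[ℱ s] (θ s))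
    -- the weights are bounded
    (hwbdd : ∀ s, ∃ M : ℝ, ∀ ω, wgt X θ s ω ≤ M) :
    riskToGo ρ X (induced X θ) T 0 = riskToGo ρ X θ T 0 ∧
    ∀ t, 1 ≤ t → t ≤ T →
      riskToGo ρ X (induced X θ) T t
        = fun ω => (∏ s ∈ Finset.range t, wgt X θ s ω) * riskToGo ρ X θ T t ω := by
  classical
  -- ρ sends the zero function to zero
  have hρ0 : ∀ s : ℕ, ρ s (fun _ => 0) = fun _ => 0 := by
    intro s
    have h := hρhom s (fun _ => 2) measurable_const ⟨2, fun _ => le_rfl⟩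
      (fun _ => by norm_num) (fun _ => 0)
    simp only [mul_zero] at h
    funext ω
    have h2 := congrFun h ω
    linarith
  rcases Nat.eq_zero_or_pos n with hn | hn
  · -- degenerate case n = 0 : everything is zero
    subst hn
    have hz : ∀ (ψ : ℕ → Ω → Fin 0 → ℝ) (k t : ℕ),
        riskToGoAux ρ X ψ k t = fun _ => 0 := by
      intro ψ k
      induction k with
      | zero => intro t; rfl
      | succ k ih =>
        intro t
        have harg : (fun ω => (∑ i, ψ t ω i * (X t ω i - X (t + 1) ω i)) +
            wgt X ψ t ω * riskToGoAux ρ X ψ k (t + 1) ω) = fun _ : Ω => (0:ℝ) := by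
          funext ω
          simp [ih, wgt]
        simp only [riskToGoAux]
        rw [harg, hρ0]
    constructor
    · simp only [riskToGo, hz]
    · intro t _ _
      funext ω
      simp [riskToGo, hz]
  · -- main case n > 0
    haveI : Nonempty (Fin n) := ⟨⟨0, hn⟩⟩
    have hA : ∀ t u (ω : Ω), 0 < ∑ i, θ t ω i * X u ω i := by
      intro t u ω
      exact Finset.sum_pos (fun i _ => mul_pos (hθpos t ω i) (hXpos u ω i))
        Finset.univ_nonempty
    have hw : ∀ t ω, 0 < wgt X θ t ω := fun t ω =>
      div_pos (hA t (t + 1) ω) (hA (t + 1) (t + 1) ω)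
    have hP : ∀ t ω, 0 < ∏ s ∈ Finset.range t, wgt X θ s ω := fun t ω =>
      Finset.prod_pos fun s _ => hw s ω
    -- measurability of the weights and their partial products
    have hwm : ∀ s, Measurable[ℱ (s + 1)] (wgt X θ s) := by
      intro s
      letI : MeasurableSpace Ω := ℱ (s + 1)
      apply Measurable.div
      · exact Finset.measurable_sum _ fun i _ =>
          (((hθad s).mono (hℱ (Nat.le_succ s)) le_rfl).eval).mul ((hXad (s + 1)).eval)
      · exact Finset.measurable_sum _ fun i _ =>
          ((hθad (s + 1)).eval).mul ((hXad (s + 1)).eval)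
    have hPm : ∀ t, Measurable[ℱ t] (fun ω => ∏ s ∈ Finset.range t, wgt X θ s ω) := by
      intro t
      letI : MeasurableSpace Ω := ℱ t
      apply Finset.measurable_prod
      intro s hs
      exact (hwm s).mono (hℱ (Finset.mem_range.mp hs)) le_rfl
    have hPbdd : ∀ t, ∃ M : ℝ, ∀ ω, (∏ s ∈ Finset.range t, wgt X θ s ω) ≤ M := by
      intro t
      refine ⟨∏ s ∈ Finset.range t, Classical.choose (hwbdd s), fun ω => ?_⟩
      exact Finset.prod_le_prod (fun s _ => (hw s ω).le)
        (fun s _ => Classical.choose_spec (hwbdd s) ω)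
    -- the induced strategy has unit weights
    have hwind : ∀ t ω, wgt X (induced X θ) t ω = 1 := by
      intro t ω
      have hB : (∑ i, θ (t + 1) ω i * X (t + 1) ω i) ≠ 0 := (hA (t + 1) (t + 1) ω).ne'
      have hnum : (∑ i, induced X θ t ω i * X (t + 1) ω i)
          = (∏ s ∈ Finset.range t, wgt X θ s ω) * ∑ i, θ t ω i * X (t + 1) ω i := by
        rw [Finset.mul_sum]
        exact Finset.sum_congr rfl fun i _ => by simp only [induced]; ring
      have hden : (∑ i, induced X θ (t + 1) ω i * X (t + 1) ω i)
          = (∏ s ∈ Finset.range t, wgt X θ s ω) * ∑ i, θ t ω i * X (t + 1) ω i := by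
        have h1 : (∑ i, induced X θ (t + 1) ω i * X (t + 1) ω i)
            = (∏ s ∈ Finset.range (t + 1), wgt X θ s ω) *
                ∑ i, θ (t + 1) ω i * X (t + 1) ω i := by
          rw [Finset.mul_sum]
          exact Finset.sum_congr rfl fun i _ => by simp only [induced]; ring
        rw [h1, Finset.prod_range_succ, mul_assoc]
        congr 1
        rw [wgt, div_mul_cancel₀ _ hB]
      rw [wgt, hnum, hden, div_self]
      exact (mul_pos (hP t ω) (hA t (t + 1) ω)).ne'
    -- main induction
    have main : ∀ k t, riskToGoAux ρ X (induced X θ) k t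
        = fun ω => (∏ s ∈ Finset.range t, wgt X θ s ω) * riskToGoAux ρ X θ k t ω := by
      intro k
      induction k with
      | zero => intro t; funext ω; simp [riskToGoAux]
      | succ k ih =>
        intro t
        have harg : (fun ω => (∑ i, induced X θ t ω i * (X t ω i - X (t + 1) ω i)) +
              wgt X (induced X θ) t ω * riskToGoAux ρ X (induced X θ) k (t + 1) ω)
            = fun ω => (∏ s ∈ Finset.range t, wgt X θ s ω) *
              ((∑ i, θ t ω i * (X t ω i - X (t + 1) ω i)) +
                wgt X θ t ω * riskToGoAux ρ X θ k (t + 1) ω) := by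
          funext ω
          rw [hwind t ω, ih, one_mul]
          have hsum : (∑ i, induced X θ t ω i * (X t ω i - X (t + 1) ω i))
              = (∏ s ∈ Finset.range t, wgt X θ s ω) *
                ∑ i, θ t ω i * (X t ω i - X (t + 1) ω i) := by
            rw [Finset.mul_sum]
            exact Finset.sum_congr rfl fun i _ => by simp only [induced]; ring
          rw [hsum]
          simp only [Finset.prod_range_succ]
          ring
        simp only [riskToGoAux]
        rw [harg]
        exact hρhom t (fun ω => ∏ s ∈ Finset.range t, wgt X θ s ω) (hPm t) (hPbdd t)
          (fun ω => hP t ω)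
          (fun ω => (∑ i, θ t ω i * (X t ω i - X (t + 1) ω i)) +
            wgt X θ t ω * riskToGoAux ρ X θ k (t + 1) ω)
    constructor
    · funext ω
      simp [riskToGo, main]
    · intro t _ _
      exact main (T + 1 - t) t
end

section
/- For a mean-ES mixture risk measure ρ(Z) = p ES_α(Z) + (1-p) E[Z] with p ∈ (0,1), the triplet (VaR_α, ES_α, ρ) is jointly elicitable: the scoring function S_ρ(z_1, z_2, z_3, y) = S_{VaR,ES}(z_1, z_2, y) + S_E((z_3 - p z_2)/(1-p), y) is strictly consistent for (VaR_α, ES_α, ρ) on the class of distributions with unique α-quantile and suitable integrability, where S_{VaR,ES} is a strictly consistent score for (VaR_α, ES_α) and S_E is a strictly consistent score for the mean. -/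
open MeasureTheory

/-- `S` is a strictly consistent scoring function for the functional `T` on the class `M`
of laws on `ℝ`: `T(F)` minimises the expected score, and is its unique minimiser. -/
def StrictlyConsistent {α : Type*} (M : Set (Measure ℝ)) (S : α → ℝ → ℝ)
    (T : Measure ℝ → α) : Prop :=
  ∀ F ∈ M, ∀ z : α,
    (∫ y, S (T F) y ∂F) ≤ (∫ y, S z y ∂F) ∧
    ((∫ y, S z y ∂F) = (∫ y, S (T F) y ∂F) → z = T F)

namespace StrictlyConsistent

variable {α β : Type*} {M : Set (Measure ℝ)}

theorem prod {S₁ : α → ℝ → ℝ} {S₂ : β → ℝ → ℝ} {T₁ : Measure ℝ → α} {T₂ : Measure ℝ → β}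
    (h₁ : StrictlyConsistent M S₁ T₁) (h₂ : StrictlyConsistent M S₂ T₂)
    (hint₁ : ∀ F ∈ M, ∀ a, Integrable (S₁ a) F) (hint₂ : ∀ F ∈ M, ∀ b, Integrable (S₂ b) F) :
    StrictlyConsistent M (fun z y => S₁ z.1 y + S₂ z.2 y) fun F => (T₁ F, T₂ F) := by
  intro F hF z
  have hsplit : ∀ w : α × β, ∫ y, S₁ w.1 y + S₂ w.2 y ∂F = ∫ y, S₁ w.1 y ∂F + ∫ y, S₂ w.2 y ∂F :=
    fun w => integral_add (hint₁ F hF _) (hint₂ F hF _)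
  obtain ⟨hle₁, heq₁⟩ := h₁ F hF z.1
  obtain ⟨hle₂, heq₂⟩ := h₂ F hF z.2
  rw [hsplit z, hsplit (T₁ F, T₂ F)]
  refine ⟨add_le_add hle₁ hle₂, fun heq => Prod.ext (heq₁ ?_) (heq₂ ?_)⟩ <;> linarith

/-- Osband's revelation principle. -/
theorem comp_equiv {S : α → ℝ → ℝ} {T : Measure ℝ → α} (h : StrictlyConsistent M S T)
    (g : α ≃ β) : StrictlyConsistent M (fun b => S (g.symm b)) (g ∘ T) := by
  intro F hF b
  obtain ⟨hle, heq⟩ := h F hF (g.symm b)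
  simp only [Function.comp_apply, Equiv.symm_apply_apply]
  exact ⟨hle, fun he => g.symm_apply_eq.mp (heq he)⟩

end StrictlyConsistent

/-- Change of coordinates from (VaR, ES, mean) to (VaR, ES, mean-ES mixture). -/
noncomputable def meanESMixtureEquiv (p : ℝ) (hp : p ≠ 1) : (ℝ × ℝ) × ℝ ≃ ℝ × ℝ × ℝ where
  toFun z := (z.1.1, z.1.2, p * z.1.2 + (1 - p) * z.2)
  invFun a := ((a.1, a.2.1), (a.2.2 - p * a.2.1) / (1 - p))
  left_inv := fun ⟨⟨z₁, z₂⟩, m⟩ => by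
    have : 1 - p ≠ 0 := sub_ne_zero.mpr hp.symm
    simp only [Prod.mk.injEq, true_and]
    field_simp
    ring
  right_inv := fun ⟨a₁, a₂, a₃⟩ => by
    have : 1 - p ≠ 0 := sub_ne_zero.mpr hp.symm
    simp only [Prod.mk.injEq, true_and]
    field_simp
    ring

/-- Joint elicitability of `(VaR_α, ES_α, ρ)` for the mean-ES mixture
`ρ(F) = p ES_α(F) + (1-p) E_F[Y]`, via the scoring function
`S_ρ(z₁, z₂, z₃, y) = S_{VaR,ES}(z₁, z₂, y) + S_E((z₃ - p z₂)/(1-p), y)`. -/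
theorem stmt9 (M : Set (Measure ℝ)) (p : ℝ) (hp : p ∈ Set.Ioo (0 : ℝ) 1)
    (VaR ES mean : Measure ℝ → ℝ)
    (SVE : ℝ × ℝ → ℝ → ℝ) (SE : ℝ → ℝ → ℝ)
    (hSVE : StrictlyConsistent M SVE fun F => (VaR F, ES F))
    (hSE : StrictlyConsistent M SE mean)
    -- suitable integrability of the scores
    (hintVE : ∀ F ∈ M, ∀ z : ℝ × ℝ, Integrable (fun y => SVE z y) F)
    (hintE : ∀ F ∈ M, ∀ z : ℝ, Integrable (fun y => SE z y) F) :
    StrictlyConsistent M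
      (fun z : ℝ × ℝ × ℝ => fun y => SVE (z.1, z.2.1) y + SE ((z.2.2 - p * z.2.1) / (1 - p)) y)
      (fun F => (VaR F, ES F, p * ES F + (1 - p) * mean F)) :=
  -- both the score and the functional match the transported ones up to unfolding `Equiv.symm`
  (hSVE.prod hSE hintVE hintE).comp_equiv (meanESMixtureEquiv p hp.2.ne)
end

section
/- For a distortion risk measure ρ(Z) = E[Z γ(F_Z(Z))] with non-decreasing weight γ and jointly continuous random variables (Y, W), under differentiability assumptions on ε ↦ F^{-1}_{Y+εW}, the Gâteaux derivative of ρ at Y in direction W is lim_{ε→0} (ρ(Y + εW) - ρ(Y))/ε = E[W γ(U_Y)], where U_Y = F_Y(Y). -/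
open MeasureTheory ProbabilityTheory Topology

/-- The (left-)quantile function of a law on `ℝ`. -/
noncomputable def quantileFn (ν : Measure ℝ) (u : ℝ) : ℝ :=
  sInf {x : ℝ | u ≤ cdf ν x}

/-- The distortion risk measure `ρ(Z) = E[Z γ(F_Z(Z))]`. -/
noncomputable def distRM {Ω : Type*} [MeasurableSpace Ω] (μ : Measure Ω)
    (γ : ℝ → ℝ) (Z : Ω → ℝ) : ℝ :=
  ∫ ω, Z ω * γ (cdf (μ.map Z) (Z ω)) ∂μ

/-!
Write `U_Z = F_Z(Z)`. The laws of `Y + εW` have no atoms, so every `U_{Y+εW}` is uniform on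
`(0, 1)`. A layer-cake decomposition reduces `E[Z g(V)]` to integrals of `Z` over events
`{t ≤ g(V)}`, and among events of equal probability the upper sets of `Z` maximise `∫ Z`; hence
`E[Z g(V)] ≤ E[Z g(U_Z)] = ρ(Z)` for every uniform `V` and monotone `g`. Used with
`(Z, V) = (Y + εW, U_Y)` and `(Y, U_{Y+εW})` this traps `ρ(Y + εW) - ρ(Y)` between
`ε E[W g(U_Y)]` and `ε E[W g(U_{Y+εW})]`. The quantile bound `|F⁻¹_{Y+εW} - F⁻¹_Y| ≤ K|ε|`
squeezes `F_{Y+εW}` between shifts of the continuous `F_Y`, so `U_{Y+εW} → U_Y` pointwise;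
`g` is continuous off a countable set, which `U_Y` avoids almost surely, and dominated
convergence concludes.
-/

open Set Filter

section Quantile

variable (ν : Measure ℝ)

lemma bddBelow_setOf_le_cdf {u : ℝ} (hu : 0 < u) : BddBelow {x | u ≤ cdf ν x} := by
  obtain ⟨y, hy⟩ := ((tendsto_cdf_atBot ν).eventually_lt_const hu).exists
  refine ⟨y, fun z hz => ?_⟩
  by_contra! hzy
  linarith [monotone_cdf ν hzy.le, hz.out]

lemma le_cdf_quantileFn {u : ℝ} (hu : u ∈ Ioo 0 1) : u ≤ cdf ν (quantileFn ν u) := by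
  have hne : {x | u ≤ cdf ν x}.Nonempty :=
    let ⟨y, hy⟩ := ((tendsto_cdf_atTop ν).eventually_const_lt hu.2).exists
    ⟨y, hy.le⟩
  refine ge_of_tendsto (((cdf ν).right_continuous _).mono Ioi_subset_Ici_self).tendsto
    (eventually_nhdsWithin_of_forall fun x hx => ?_)
  obtain ⟨z, hz, hzx⟩ := exists_lt_of_csInf_lt hne hx
  exact hz.out.trans (monotone_cdf ν hzx.le)

lemma quantileFn_le_iff {u x : ℝ} (hu : u ∈ Ioo 0 1) : quantileFn ν u ≤ x ↔ u ≤ cdf ν x :=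
  ⟨fun h => (le_cdf_quantileFn ν hu).trans (monotone_cdf ν h),
    fun h => csInf_le (bddBelow_setOf_le_cdf ν hu.1) h⟩

theorem continuous_cdf [IsProbabilityMeasure ν] [NullSingletonClass ν] : Continuous (cdf ν) := by
  refine continuous_iff_continuousAt.2 fun x => ?_
  rw [(monotone_cdf ν).continuousAt_iff_leftLim_eq_rightLim,
    ((cdf ν).right_continuous x).rightLim_eq]
  have h := (cdf ν).measure_singleton x
  rw [measure_cdf, measure_singleton, eq_comm, ENNReal.ofReal_eq_zero] at h
  exact le_antisymm ((monotone_cdf ν).leftLim_le le_rfl) (by linarith)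

lemma cdf_le_cdf_add_of_quantileFn_le_add {ν' : Measure ℝ} {c : ℝ}
    (h : ∀ u ∈ Ioo (0 : ℝ) 1, quantileFn ν' u ≤ quantileFn ν u + c) (x : ℝ) :
    cdf ν x ≤ cdf ν' (x + c) := by
  by_contra! hlt
  obtain ⟨u, hu', hu⟩ := exists_between hlt
  have hu01 : u ∈ Ioo (0 : ℝ) 1 := ⟨(cdf_nonneg _ _).trans_lt hu', hu.trans_le (cdf_le_one _ _)⟩
  have hq : quantileFn ν u + c ≤ x + c := by linarith [(quantileFn_le_iff ν hu01).2 hu.le]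
  linarith [(quantileFn_le_iff ν' hu01).1 ((h u hu01).trans hq)]

lemma measure_cdf_preimage_Iic [IsProbabilityMeasure ν] [NullSingletonClass ν] {a : ℝ}
    (ha : a ∈ Ico (0 : ℝ) 1) : ν (cdf ν ⁻¹' Iic a) = ENNReal.ofReal a := by
  set S := cdf ν ⁻¹' Iic a
  rcases S.eq_empty_or_nonempty with hS | hS
  · have : a ≤ 0 := ge_of_tendsto' (tendsto_cdf_atBot ν) fun x =>
      (not_le.1 (eq_empty_iff_forall_notMem.1 hS x)).le
    rw [hS, measure_empty, le_antisymm this ha.1, ENNReal.ofReal_zero]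
  have hbdd : BddAbove S := by
    obtain ⟨y, hy⟩ := ((tendsto_cdf_atTop ν).eventually_const_lt ha.2).exists
    exact ⟨y, fun x hx => le_of_not_gt fun hyx =>
      not_le_of_gt (hy.trans_le (monotone_cdf ν hyx.le)) hx⟩
  have hs : sSup S ∈ S := ((isClosed_Iic.preimage (continuous_cdf ν))).csSup_mem hS hbdd
  have hSs : S = Iic (sSup S) :=
    Subset.antisymm (fun x hx => le_csSup hbdd hx) fun x hx => (monotone_cdf ν hx).trans hs
  have hFs : cdf ν (sSup S) = a := by
    refine le_antisymm hs (ge_of_tendsto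
      ((continuous_cdf ν).continuousWithinAt (s := Ioi (sSup S))).tendsto ?_)
    filter_upwards [self_mem_nhdsWithin] with x hx
    exact (not_le.1 fun h => not_le_of_gt hx (le_csSup hbdd h)).le
  rw [hSs, ← ofReal_cdf, hFs]

theorem map_cdf_eq_restrict_Ioo [IsProbabilityMeasure ν] [NullSingletonClass ν] :
    ν.map (cdf ν) = volume.restrict (Ioo 0 1) := by
  have hFm : Measurable (cdf ν) := (monotone_cdf ν).measurable
  refine Measure.ext_of_Iic _ _ fun a => ?_
  rw [Measure.map_apply hFm measurableSet_Iic, Measure.restrict_apply measurableSet_Iic]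
  rcases lt_or_ge a 0 with ha0 | ha0
  · have h1 : cdf ν ⁻¹' Iic a = ∅ :=
      eq_empty_of_forall_notMem fun x hx => absurd hx (not_le.2 (ha0.trans_le (cdf_nonneg ν x)))
    have h2 : Iic a ∩ Ioo 0 1 = ∅ :=
      eq_empty_of_forall_notMem fun x hx => absurd hx.2.1 (not_lt.2 (hx.1.trans ha0.le))
    rw [h1, h2, measure_empty, measure_empty]
  rcases lt_or_ge a 1 with ha1 | ha1
  · have h2 : Iic a ∩ Ioo 0 1 = Ioc 0 a := by
      ext x
      simp only [mem_inter_iff, mem_Iic, mem_Ioo, mem_Ioc]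
      exact ⟨fun ⟨h, h0, _⟩ => ⟨h0, h⟩, fun ⟨h0, h⟩ => ⟨h, h0, h.trans_lt ha1⟩⟩
    rw [measure_cdf_preimage_Iic ν ⟨ha0, ha1⟩, h2, Real.volume_Ioc, sub_zero]
  · have h1 : cdf ν ⁻¹' Iic a = univ := eq_univ_of_forall fun x => (cdf_le_one ν x).trans ha1
    rw [h1, measure_univ, inter_eq_right.2 fun x hx => hx.2.le.trans ha1, Real.volume_Ioo]
    simp

end Quantile

lemma IsUpperSet.eq_empty_or_eq_univ_or_exists {α : Type*} [ConditionallyCompleteLinearOrder α]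
    {S : Set α} (hS : IsUpperSet S) : S = ∅ ∨ S = univ ∨ ∃ s, Ioi s ⊆ S ∧ S ⊆ Ici s := by
  rcases S.eq_empty_or_nonempty with hE | ⟨a, ha⟩
  · exact Or.inl hE
  rcases eq_or_ne S univ with hU | hU
  · exact Or.inr (Or.inl hU)
  obtain ⟨b, hb⟩ := (ne_univ_iff_exists_notMem S).1 hU
  have hbdd : BddBelow S := ⟨b, fun x hx => le_of_not_ge fun hxb => hb (hS hxb hx)⟩
  refine Or.inr (Or.inr ⟨sInf S, fun x hx => ?_, fun x hx => csInf_le hbdd hx⟩)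
  obtain ⟨y, hy, hyx⟩ := exists_lt_of_csInf_lt ⟨a, ha⟩ hx
  exact hS hyx.le hy

lemma integral_Ioc_indicator_Iic {a c B : ℝ} (hc : c ∈ Icc 0 B) :
    ∫ t in Ioc 0 B, (Iic c).indicator (fun _ => a) t = a * c := by
  rw [setIntegral_indicator measurableSet_Iic, setIntegral_const, Ioc_inter_Iic, min_eq_right hc.2,
    measureReal_def, Real.volume_Ioc, sub_zero, ENNReal.toReal_ofReal hc.1, smul_eq_mul, mul_comm]

section Rearrangement

variable {Ω : Type*} [MeasurableSpace Ω] {μ : Measure Ω} {Z : Ω → ℝ}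

lemma setIntegral_le_setIntegral_preimage_of_isUpperSet [IsProbabilityMeasure μ]
    (hZm : Measurable Z) (hZ : Integrable Z μ) {A : Set Ω} (hA : MeasurableSet A) {S : Set ℝ}
    (hS : IsUpperSet S) (hSm : MeasurableSet S) (hAS : μ A = μ (Z ⁻¹' S)) :
    ∫ ω in A, Z ω ∂μ ≤ ∫ ω in Z ⁻¹' S, Z ω ∂μ := by
  set B := Z ⁻¹' S
  have hB : MeasurableSet B := hZm hSm
  rcases hS.eq_empty_or_eq_univ_or_exists with hE | hU | ⟨s, hIoi, hIci⟩
  · have hBe : B = ∅ := by simp [B, hE]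
    have hA0 : μ A = 0 := by rw [hAS, hBe, measure_empty]
    simp [hBe, Measure.restrict_eq_zero.2 hA0]
  · have hBu : B = univ := by simp [B, hU]
    have hAu : A =ᵐ[μ] (univ : Set Ω) := by
      rw [ae_eq_univ, prob_compl_eq_one_sub hA, hAS, hBu, measure_univ, tsub_self]
    rw [hBu, setIntegral_congr_set hAu]
  -- `(1_B - 1_A) (Z - s) ≥ 0` pointwise, while `μ A = μ B` cancels the `s` terms
  have key :
      0 ≤ ∫ ω, B.indicator (fun ω => Z ω - s) ω - A.indicator (fun ω => Z ω - s) ω ∂μ := by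
    refine integral_nonneg fun ω => show (0 : ℝ) ≤ _ from ?_
    by_cases hωB : ω ∈ B <;> by_cases hωA : ω ∈ A <;>
      simp only [indicator_of_mem, indicator_of_notMem, hωA, hωB, not_false_eq_true, sub_self,
        sub_zero, zero_sub, le_refl, neg_nonneg, sub_nonneg, sub_nonpos]
    · exact hIci hωB
    · exact not_lt.1 fun h => hωB (hIoi h)
  have hint : ∀ T, MeasurableSet T → ∫ ω, T.indicator (fun ω => Z ω - s) ω ∂μ
      = ∫ ω in T, Z ω ∂μ - s * μ.real T := by
    intro T hT
    rw [integral_indicator hT, integral_sub hZ.integrableOn (integrableOn_const (by finiteness)),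
      setIntegral_const, smul_eq_mul, mul_comm]
  have hZs : Integrable (fun ω => Z ω - s) μ := hZ.sub (integrable_const s)
  rw [integral_sub (hZs.indicator hB) (hZs.indicator hA), hint B hB, hint A hA, measureReal_def,
    measureReal_def, hAS] at key
  linarith

variable {X : Ω → ℝ} {B : ℝ}

lemma integrable_indicator_setOf_snd_le [SFinite μ] (hZ : Integrable Z μ)
    (hXm : Measurable X) :
    Integrable ({p : Ω × ℝ | p.2 ≤ X p.1}.indicator fun p => Z p.1)
      (μ.prod (volume.restrict (Ioc 0 B))) := by
  have hZfst : Integrable (fun p : Ω × ℝ => Z p.1) (μ.prod (volume.restrict (Ioc 0 B))) :=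
    hZ.comp_fst _
  exact hZfst.indicator (measurableSet_le measurable_snd (hXm.comp measurable_fst))

lemma integral_indicator_setOf_snd_le_eq_setIntegral (hXm : Measurable X) (t : ℝ) :
    ∫ ω, {p : Ω × ℝ | p.2 ≤ X p.1}.indicator (fun p => Z p.1) (ω, t) ∂μ
      = ∫ ω in {ω | t ≤ X ω}, Z ω ∂μ :=
  integral_indicator (hXm measurableSet_Ici)

lemma integral_mul_eq_integral_setIntegral_setOf_le [SFinite μ] (hZ : Integrable Z μ)
    (hXm : Measurable X) (hXB : ∀ ω, X ω ∈ Icc 0 B) :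
    ∫ ω, Z ω * X ω ∂μ = ∫ t in Ioc 0 B, ∫ ω in {ω | t ≤ X ω}, Z ω ∂μ := by
  calc ∫ ω, Z ω * X ω ∂μ
      = ∫ ω, (∫ t in Ioc 0 B, {p : Ω × ℝ | p.2 ≤ X p.1}.indicator (fun p => Z p.1) (ω, t)) ∂μ :=
        integral_congr_ae (ae_of_all _ fun ω => (integral_Ioc_indicator_Iic (hXB ω)).symm)
    _ = ∫ t in Ioc 0 B, ∫ ω, {p : Ω × ℝ | p.2 ≤ X p.1}.indicator (fun p => Z p.1) (ω, t) ∂μ :=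
        integral_integral_swap (f := fun ω t => {p : Ω × ℝ | p.2 ≤ X p.1}.indicator
          (fun p => Z p.1) (ω, t)) (integrable_indicator_setOf_snd_le hZ hXm)
    _ = _ := by simp_rw [integral_indicator_setOf_snd_le_eq_setIntegral hXm]

lemma integrableOn_setIntegral_setOf_le [SFinite μ] (hZ : Integrable Z μ)
    (hXm : Measurable X) :
    IntegrableOn (fun t => ∫ ω in {ω | t ≤ X ω}, Z ω ∂μ) (Ioc 0 B) := by
  simp_rw [← integral_indicator_setOf_snd_le_eq_setIntegral hXm]
  exact (integrable_indicator_setOf_snd_le hZ hXm).integral_prod_right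

lemma integral_mul_le_integral_mul_comp_of_map_eq [IsProbabilityMeasure μ] (hZm : Measurable Z)
    (hZ : Integrable Z μ) {G : ℝ → ℝ} (hG : Monotone G) (hGm : Measurable G)
    (hGB : ∀ x, G x ∈ Icc 0 B) (hXm : Measurable X) (hXB : ∀ ω, X ω ∈ Icc 0 B)
    (hlaw : μ.map X = μ.map fun ω => G (Z ω)) :
    ∫ ω, Z ω * X ω ∂μ ≤ ∫ ω, Z ω * G (Z ω) ∂μ := by
  have hGZm : Measurable fun ω => G (Z ω) := hGm.comp hZm
  rw [integral_mul_eq_integral_setIntegral_setOf_le hZ hXm hXB,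
    integral_mul_eq_integral_setIntegral_setOf_le hZ hGZm fun ω => hGB (Z ω)]
  refine setIntegral_mono (integrableOn_setIntegral_setOf_le hZ hXm)
    (integrableOn_setIntegral_setOf_le hZ hGZm) fun t => ?_
  refine setIntegral_le_setIntegral_preimage_of_isUpperSet hZm hZ (hXm measurableSet_Ici)
    (S := {x | t ≤ G x}) (fun x y hxy hx => hx.trans (hG hxy)) (hGm measurableSet_Ici) ?_
  rw [← Measure.map_apply hXm measurableSet_Ici, hlaw, Measure.map_apply hGZm measurableSet_Ici]
  rfl

end Rearrangement

lemma Monotone.ae_continuousAt_comp {Ω : Type*} [MeasurableSpace Ω] {μ : Measure Ω}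
    {g : ℝ → ℝ} (hg : Monotone g) {V : Ω → ℝ} (hV : Measurable V)
    [NullSingletonClass (μ.map V)] : ∀ᵐ ω ∂μ, ContinuousAt g (V ω) :=
  ae_of_ae_map hV.aemeasurable (ae_iff.2 (hg.countable_not_continuousAt.measure_zero _))

lemma tendsto_cdf_of_abs_quantileFn_sub_le {α : Type*} {l : Filter α} {ν : α → Measure ℝ}
    {ν₀ : Measure ℝ} {c x : α → ℝ} {x₀ : ℝ}
    (hq : ∀ᶠ a in l, ∀ u ∈ Ioo (0 : ℝ) 1, |quantileFn (ν a) u - quantileFn ν₀ u| ≤ c a)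
    (hc : Tendsto c l (𝓝 0)) (hx : Tendsto x l (𝓝 x₀)) (h₀ : ContinuousAt (cdf ν₀) x₀) :
    Tendsto (fun a => cdf (ν a) (x a)) l (𝓝 (cdf ν₀ x₀)) := by
  have hlo : Tendsto (fun a => cdf ν₀ (x a - c a)) l (𝓝 (cdf ν₀ x₀)) :=
    h₀.tendsto.comp (by simpa using hx.sub hc)
  have hhi : Tendsto (fun a => cdf ν₀ (x a + c a)) l (𝓝 (cdf ν₀ x₀)) :=
    h₀.tendsto.comp (by simpa using hx.add hc)
  refine tendsto_of_tendsto_of_tendsto_of_le_of_le' hlo hhi ?_ ?_ <;>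
    filter_upwards [hq] with a ha
  · simpa using cdf_le_cdf_add_of_quantileFn_le_add ν₀ (ν' := ν a) (c := c a)
      (fun u hu => by linarith [(abs_le.1 (ha u hu)).2]) (x a - c a)
  · exact cdf_le_cdf_add_of_quantileFn_le_add (ν a) (ν' := ν₀) (c := c a)
      (fun u hu => by linarith [(abs_le.1 (ha u hu)).1]) (x a)

lemma tendsto_div_of_mul_le_of_le_mul {N b : ℝ → ℝ} {a : ℝ}
    (hlo : ∀ᶠ ε in 𝓝[≠] 0, ε * a ≤ N ε) (hhi : ∀ᶠ ε in 𝓝[≠] 0, N ε ≤ ε * b ε)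
    (hb : Tendsto b (𝓝[≠] 0) (𝓝 a)) : Tendsto (fun ε => N ε / ε) (𝓝[≠] 0) (𝓝 a) := by
  have hbetween : ∀ᶠ ε in 𝓝[≠] 0, min a (b ε) ≤ N ε / ε ∧ N ε / ε ≤ max a (b ε) := by
    filter_upwards [hlo, hhi, self_mem_nhdsWithin] with ε h1 h2 (hε : ε ≠ 0)
    rcases hε.lt_or_gt with hneg | hpos
    · exact ⟨min_le_of_right_le ((le_div_iff_of_neg hneg).2 (by linarith)),
        le_max_of_le_left ((div_le_iff_of_neg hneg).2 (by linarith))⟩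
    · exact ⟨min_le_of_left_le ((le_div_iff₀ hpos).2 (by linarith)),
        le_max_of_le_right ((div_le_iff₀ hpos).2 (by linarith))⟩
  exact tendsto_of_tendsto_of_tendsto_of_le_of_le'
    (by simpa using (tendsto_const_nhds (x := a)).min hb)
    (by simpa using (tendsto_const_nhds (x := a)).max hb) (hbetween.mono fun _ h => h.1)
    (hbetween.mono fun _ h => h.2)

section Distortion

variable {Ω : Type*} [MeasurableSpace Ω] {μ : Measure Ω} {g : ℝ → ℝ} {B : ℝ}

lemma integrable_mul_comp (hgm : Measurable g) (hgB : ∀ x, g x ∈ Icc 0 B) {Y V : Ω → ℝ}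
    (hY : Integrable Y μ) (hVm : Measurable V) : Integrable (fun ω => Y ω * g (V ω)) μ :=
  hY.mul_bdd (hgm.comp hVm).aestronglyMeasurable (c := B) (ae_of_all _ fun ω => by
    rw [Real.norm_eq_abs, abs_of_nonneg (hgB _).1]; exact (hgB _).2)

lemma integral_add_mul_mul_comp (hgm : Measurable g) (hgB : ∀ x, g x ∈ Icc 0 B)
    {Y W V : Ω → ℝ} (hY : Integrable Y μ) (hW : Integrable W μ) (hVm : Measurable V) (ε : ℝ) :
    ∫ ω, (Y ω + ε * W ω) * g (V ω) ∂μ = ∫ ω, Y ω * g (V ω) ∂μ + ε * ∫ ω, W ω * g (V ω) ∂μ := by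
  rw [← integral_const_mul, ← integral_add (integrable_mul_comp hgm hgB hY hVm)
    ((integrable_mul_comp hgm hgB hW hVm).const_mul ε)]
  exact integral_congr_ae (ae_of_all _ fun ω => by ring)

variable [IsProbabilityMeasure μ]

lemma map_cdf_map_eq_restrict_Ioo {X : Ω → ℝ} (hXm : Measurable X)
    [NullSingletonClass (μ.map X)] :
    μ.map (fun ω => cdf (μ.map X) (X ω)) = volume.restrict (Ioo 0 1) := by
  have := Measure.isProbabilityMeasure_map (μ := μ) hXm.aemeasurable
  rw [← map_cdf_eq_restrict_Ioo (μ.map X), Measure.map_map (monotone_cdf _).measurable hXm]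
  rfl

lemma map_comp_cdf_map_eq (hgm : Measurable g) {X : Ω → ℝ} (hXm : Measurable X)
    [NullSingletonClass (μ.map X)] :
    μ.map (fun ω => g (cdf (μ.map X) (X ω))) = (volume.restrict (Ioo 0 1)).map g := by
  rw [← map_cdf_map_eq_restrict_Ioo (μ := μ) hXm]
  exact (Measure.map_map hgm ((monotone_cdf _).measurable.comp hXm)).symm

lemma integral_mul_comp_cdf_le_distRM (hg : Monotone g) (hgm : Measurable g)
    (hgB : ∀ x, g x ∈ Icc 0 B) {X Z : Ω → ℝ} (hXm : Measurable X) (hZm : Measurable Z)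
    (hZ : Integrable Z μ) [NullSingletonClass (μ.map X)] [NullSingletonClass (μ.map Z)] :
    ∫ ω, Z ω * g (cdf (μ.map X) (X ω)) ∂μ ≤ distRM μ g Z :=
  integral_mul_le_integral_mul_comp_of_map_eq hZm hZ (hg.comp (monotone_cdf _))
    (hgm.comp (monotone_cdf _).measurable) (fun _ => hgB _)
    (hgm.comp ((monotone_cdf _).measurable.comp hXm)) (fun _ => hgB _)
    ((map_comp_cdf_map_eq hgm hXm).trans (map_comp_cdf_map_eq hgm hZm).symm)

lemma mul_integral_le_distRM_add_mul_sub (hg : Monotone g) (hgm : Measurable g)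
    (hgB : ∀ x, g x ∈ Icc 0 B) {Y W : Ω → ℝ} (hYm : Measurable Y) (hWm : Measurable W)
    (hY : Integrable Y μ) (hW : Integrable W μ) (ε : ℝ) [NullSingletonClass (μ.map Y)]
    [NullSingletonClass (μ.map fun ω => Y ω + ε * W ω)] :
    ε * ∫ ω, W ω * g (cdf (μ.map Y) (Y ω)) ∂μ
      ≤ distRM μ g (fun ω => Y ω + ε * W ω) - distRM μ g Y := by
  have h := integral_mul_comp_cdf_le_distRM hg hgm hgB hYm (Z := fun ω => Y ω + ε * W ω)
    (by fun_prop) (hY.add (hW.const_mul ε))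
  rw [integral_add_mul_mul_comp hgm hgB hY hW (V := fun ω => cdf (μ.map Y) (Y ω))
    ((monotone_cdf _).measurable.comp hYm)] at h
  unfold distRM at *
  linarith

lemma distRM_add_mul_sub_le_mul_integral (hg : Monotone g) (hgm : Measurable g)
    (hgB : ∀ x, g x ∈ Icc 0 B) {Y W : Ω → ℝ} (hYm : Measurable Y) (hWm : Measurable W)
    (hY : Integrable Y μ) (hW : Integrable W μ) (ε : ℝ) [NullSingletonClass (μ.map Y)]
    [NullSingletonClass (μ.map fun ω => Y ω + ε * W ω)] :
    distRM μ g (fun ω => Y ω + ε * W ω) - distRM μ g Y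
      ≤ ε * ∫ ω, W ω * g (cdf (μ.map fun ω => Y ω + ε * W ω) (Y ω + ε * W ω)) ∂μ := by
  have hZm : Measurable fun ω => Y ω + ε * W ω := by fun_prop
  have h := integral_mul_comp_cdf_le_distRM hg hgm hgB hZm hYm hY
  have hsplit := integral_add_mul_mul_comp hgm hgB hY hW
    (V := fun ω => cdf (μ.map fun ω => Y ω + ε * W ω) (Y ω + ε * W ω))
    ((monotone_cdf _).measurable.comp hZm) ε
  unfold distRM at *
  linarith

end Distortion

theorem tendsto_distRM_add_mul_sub_div_of_measurable {Ω : Type*} [MeasurableSpace Ω]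
    {μ : Measure Ω} [IsProbabilityMeasure μ] {g : ℝ → ℝ} {B : ℝ} (hg : Monotone g)
    (hgm : Measurable g) (hgB : ∀ x, g x ∈ Icc 0 B) {Y W : Ω → ℝ} (hYm : Measurable Y)
    (hWm : Measurable W) (hY : Integrable Y μ) (hW : Integrable W μ)
    (hatoms : ∀ ε : ℝ, NullSingletonClass (μ.map fun ω => Y ω + ε * W ω)) {K : ℝ}
    (hlip : ∀ᶠ ε in 𝓝 0, ∀ u ∈ Ioo (0 : ℝ) 1,
      |quantileFn (μ.map fun ω => Y ω + ε * W ω) u - quantileFn (μ.map Y) u| ≤ K * |ε|) :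
    Tendsto (fun ε => (distRM μ g (fun ω => Y ω + ε * W ω) - distRM μ g Y) / ε) (𝓝[≠] 0)
      (𝓝 (∫ ω, W ω * g (cdf (μ.map Y) (Y ω)) ∂μ)) := by
  have : NullSingletonClass (μ.map Y) := by simpa using hatoms 0
  have : IsProbabilityMeasure (μ.map Y) := Measure.isProbabilityMeasure_map hYm.aemeasurable
  have : NullSingletonClass (μ.map fun ω => cdf (μ.map Y) (Y ω)) := by
    rw [map_cdf_map_eq_restrict_Ioo hYm]; infer_instance
  refine tendsto_div_of_mul_le_of_le_mul
    (.of_forall fun ε => mul_integral_le_distRM_add_mul_sub hg hgm hgB hYm hWm hY hW ε)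
    (.of_forall fun ε => distRM_add_mul_sub_le_mul_integral hg hgm hgB hYm hWm hY hW ε) ?_
  have hU : ∀ ω, Tendsto (fun ε => cdf (μ.map fun ω => Y ω + ε * W ω) (Y ω + ε * W ω))
      (𝓝[≠] 0) (𝓝 (cdf (μ.map Y) (Y ω))) := by
    intro ω
    refine tendsto_cdf_of_abs_quantileFn_sub_le (hlip.filter_mono nhdsWithin_le_nhds) ?_ ?_
      (continuous_cdf _).continuousAt <;> refine tendsto_nhdsWithin_of_tendsto_nhds ?_
    · simpa using (tendsto_id (x := 𝓝 (0 : ℝ))).abs.const_mul K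
    · simpa using ((tendsto_id (x := 𝓝 (0 : ℝ))).mul_const (W ω)).const_add (Y ω)
  refine tendsto_integral_filter_of_dominated_convergence (fun ω => |W ω| * B)
    (.of_forall fun ε => ?_) (.of_forall fun ε => .of_forall fun ω => ?_) (hW.abs.mul_const B) ?_
  · exact (integrable_mul_comp hgm hgB hW
      ((monotone_cdf _).measurable.comp (by fun_prop))).aestronglyMeasurable
  · rw [Real.norm_eq_abs, abs_mul, abs_of_nonneg (hgB _).1]
    exact mul_le_mul_of_nonneg_left (hgB _).2 (abs_nonneg _)
  · filter_upwards [hg.ae_continuousAt_comp (V := fun ω => cdf (μ.map Y) (Y ω))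
      ((monotone_cdf _).measurable.comp hYm)] with ω hω
    exact (hω.tendsto.comp (hU ω)).const_mul (W ω)

lemma volume_setOf_fst_add_mul_snd_eq (ε x : ℝ) :
    (volume : Measure (ℝ × ℝ)) {p | p.1 + ε * p.2 = x} = 0 := by
  have hL : MeasurableSet {p : ℝ × ℝ | p.1 + ε * p.2 = x} :=
    measurableSet_eq_fun (by fun_prop) measurable_const
  have hslice : ∀ y : ℝ, (fun a => (a, y)) ⁻¹' {p : ℝ × ℝ | p.1 + ε * p.2 = x} = {x - ε * y} :=
    fun y => by ext a; simp [eq_sub_iff_add_eq]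
  rw [Measure.volume_eq_prod, Measure.prod_apply_symm hL]
  simp [hslice]

lemma nullSingletonClass_map_add_mul {Ω : Type*} [MeasurableSpace Ω] {μ : Measure Ω}
    {Y W : Ω → ℝ} (hY : AEMeasurable Y μ) (hW : AEMeasurable W μ)
    (hac : μ.map (fun ω => (Y ω, W ω)) ≪ volume) (ε : ℝ) :
    NullSingletonClass (μ.map fun ω => Y ω + ε * W ω) := by
  refine ⟨fun x => ?_⟩
  have hL : Measurable fun p : ℝ × ℝ => p.1 + ε * p.2 := by fun_prop
  rw [show (fun ω => Y ω + ε * W ω) = (fun p : ℝ × ℝ => p.1 + ε * p.2) ∘ fun ω => (Y ω, W ω)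
      from rfl, ← AEMeasurable.map_map_of_aemeasurable hL.aemeasurable (hY.prodMk hW),
    Measure.map_apply hL (measurableSet_singleton x)]
  exact hac (volume_setOf_fst_add_mul_snd_eq ε x)

lemma abs_sub_le_of_forall_exists_hasDerivAt {f : ℝ → ℝ} {s : Set ℝ} {K : ℝ} (hs : Convex ℝ s)
    (hf : ∀ x ∈ s, ∃ d, |d| ≤ K ∧ HasDerivAt f d x) {x y : ℝ} (hx : x ∈ s) (hy : y ∈ s) :
    |f y - f x| ≤ K * |y - x| :=
  hs.norm_image_sub_le_of_norm_deriv_le (fun z hz => (hf z hz).choose_spec.2.differentiableAt)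
    (fun z hz => by rw [(hf z hz).choose_spec.2.deriv]; exact (hf z hz).choose_spec.1) hx hy

lemma integral_mul_comp_cdf_congr {Ω : Type*} [MeasurableSpace Ω] {μ : Measure Ω}
    {γ g : ℝ → ℝ} (hγg : EqOn γ g (Icc 0 1)) {Y Y' W W' : Ω → ℝ} (hY : Y =ᵐ[μ] Y')
    (hW : W =ᵐ[μ] W') :
    ∫ ω, W ω * γ (cdf (μ.map Y) (Y ω)) ∂μ = ∫ ω, W' ω * g (cdf (μ.map Y') (Y' ω)) ∂μ := by
  rw [Measure.map_congr hY]
  refine integral_congr_ae ?_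
  filter_upwards [hY, hW] with ω hYω hWω
  rw [hYω, hWω, hγg ⟨cdf_nonneg _ _, cdf_le_one _ _⟩]

lemma distRM_congr {Ω : Type*} [MeasurableSpace Ω] {μ : Measure Ω} {γ g : ℝ → ℝ}
    (hγg : EqOn γ g (Icc 0 1)) {Y Y' : Ω → ℝ} (hY : Y =ᵐ[μ] Y') :
    distRM μ γ Y = distRM μ g Y' :=
  integral_mul_comp_cdf_congr hγg hY hY

theorem tendsto_distRM_add_mul_sub_div {Ω : Type*} [MeasurableSpace Ω] {μ : Measure Ω}
    [IsProbabilityMeasure μ] {γ : ℝ → ℝ} (hγm : Measurable γ) (hγ : MonotoneOn γ (Icc 0 1))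
    (hγ0 : ∀ u ∈ Icc (0 : ℝ) 1, 0 ≤ γ u) {Y W : Ω → ℝ} (hY : Integrable Y μ)
    (hW : Integrable W μ) (hatoms : ∀ ε : ℝ, NullSingletonClass (μ.map fun ω => Y ω + ε * W ω))
    {K : ℝ} (hlip : ∀ᶠ ε in 𝓝 0, ∀ u ∈ Ioo (0 : ℝ) 1,
      |quantileFn (μ.map fun ω => Y ω + ε * W ω) u - quantileFn (μ.map Y) u| ≤ K * |ε|) :
    Tendsto (fun ε => (distRM μ γ (fun ω => Y ω + ε * W ω) - distRM μ γ Y) / ε) (𝓝[≠] 0)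
      (𝓝 (∫ ω, W ω * γ (cdf (μ.map Y) (Y ω)) ∂μ)) := by
  obtain ⟨Y', hY'm, hYY'⟩ := hY.aestronglyMeasurable
  obtain ⟨W', hW'm, hWW'⟩ := hW.aestronglyMeasurable
  set g : ℝ → ℝ := fun x => γ (projIcc 0 1 zero_le_one x)
  have hg : Monotone g := fun x y hxy =>
    hγ (projIcc 0 1 _ x).2 (projIcc 0 1 _ y).2 (monotone_projIcc _ hxy)
  have hgm : Measurable g := hγm.comp (continuous_subtype_val.comp continuous_projIcc).measurable
  have hgB : ∀ x, g x ∈ Icc 0 (γ 1) := fun x =>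
    ⟨hγ0 _ (projIcc 0 1 _ x).2, hγ (projIcc 0 1 _ x).2 ⟨zero_le_one, le_rfl⟩ (projIcc 0 1 _ x).2.2⟩
  have hγg : EqOn γ g (Icc 0 1) := fun x hx => by simp [g, projIcc_of_mem _ hx]
  have hZ : ∀ ε : ℝ, (fun ω => Y ω + ε * W ω) =ᵐ[μ] fun ω => Y' ω + ε * W' ω := fun ε => by
    filter_upwards [hYY', hWW'] with ω hYω hWω
    rw [hYω, hWω]
  have hmap : ∀ ε : ℝ, μ.map (fun ω => Y ω + ε * W ω) = μ.map fun ω => Y' ω + ε * W' ω :=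
    fun ε => Measure.map_congr (hZ ε)
  have key := tendsto_distRM_add_mul_sub_div_of_measurable hg hgm hgB hY'm.measurable
    hW'm.measurable (hY.congr hYY') (hW.congr hWW') (fun ε => hmap ε ▸ hatoms ε)
    (by simpa only [hmap, Measure.map_congr hYY'] using hlip)
  rw [integral_mul_comp_cdf_congr hγg hYY' hWW']
  refine key.congr fun ε => ?_
  rw [distRM_congr hγg (hZ ε), distRM_congr hγg hYY']

theorem stmt14_general {Ω : Type*} [MeasurableSpace Ω] (μ : Measure Ω) [IsProbabilityMeasure μ]
    (γ : ℝ → ℝ)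
    (hγ_meas : Measurable γ)
    (hγ_mono : MonotoneOn γ (Set.Icc 0 1))
    (hγ_nonneg : ∀ u ∈ Set.Icc (0 : ℝ) 1, 0 ≤ γ u)
    (Y W : Ω → ℝ) (hY : MemLp Y 2 μ) (hW : MemLp W 2 μ)
    -- `(Y, W)` has a joint density with respect to Lebesgue measure
    (hdens : ∃ f : ℝ × ℝ → ENNReal, Measurable f ∧
      μ.map (fun ω => (Y ω, W ω)) = (volume : Measure (ℝ × ℝ)).withDensity f)
    -- `ε ↦ F⁻¹_{Y+εW}(u)` is differentiable near `ε = 0` with bounded derivative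
    (hdiff : ∃ δ > (0 : ℝ), ∃ K : ℝ, ∀ u ∈ Set.Ioo (0 : ℝ) 1, ∀ ε ∈ Set.Ioo (-δ) δ,
      ∃ d : ℝ, |d| ≤ K ∧
        HasDerivAt (fun e : ℝ => quantileFn (μ.map (fun ω => Y ω + e * W ω)) u) d ε) :
    Filter.Tendsto
      (fun ε : ℝ => (distRM μ γ (fun ω => Y ω + ε * W ω) - distRM μ γ Y) / ε)
      (𝓝[≠] (0 : ℝ))
      (𝓝 (∫ ω, W ω * γ (cdf (μ.map Y) (Y ω)) ∂μ)) := by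
  obtain ⟨f, -, hf⟩ := hdens
  obtain ⟨δ, hδ, K, hK⟩ := hdiff
  have hac : μ.map (fun ω => (Y ω, W ω)) ≪ volume := by
    rw [hf]; exact withDensity_absolutelyContinuous _ _
  refine tendsto_distRM_add_mul_sub_div hγ_meas hγ_mono hγ_nonneg (hY.integrable one_le_two)
    (hW.integrable one_le_two) (nullSingletonClass_map_add_mul hY.1.aemeasurable
      hW.1.aemeasurable hac) (K := K) ?_
  have h0 : (0 : ℝ) ∈ Ioo (-δ) δ := ⟨neg_lt_zero.2 hδ, hδ⟩
  filter_upwards [Ioo_mem_nhds h0.1 h0.2] with ε hε u hu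
  simpa using abs_sub_le_of_forall_exists_hasDerivAt (convex_Ioo _ _) (hK u hu) h0 hε

/-- Gâteaux derivative of a distortion risk measure: for jointly continuous `(Y, W)` and
under differentiability assumptions on `ε ↦ F⁻¹_{Y+εW}`,
`lim_{ε→0} (ρ(Y + εW) - ρ(Y))/ε = E[W γ(F_Y(Y))]`. -/
theorem stmt14 {Ω : Type*} [MeasurableSpace Ω] (μ : Measure Ω) [IsProbabilityMeasure μ]
    (γ : ℝ → ℝ) (C : ℝ)
    (hγ_meas : Measurable γ)
    (hγ_mono : MonotoneOn γ (Set.Icc 0 1))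
    (hγ_nonneg : ∀ u ∈ Set.Icc (0 : ℝ) 1, 0 ≤ γ u)
    (hγ_int : IntegrableOn γ (Set.Ioo 0 1) volume)
    (hγ_one : ∫ u in Set.Ioo (0 : ℝ) 1, γ u = 1)
    (hγ_sq_int : IntegrableOn (fun u => (γ u) ^ 2) (Set.Ioo 0 1) volume)
    (hγ_sq : ∫ u in Set.Ioo (0 : ℝ) 1, (γ u) ^ 2 ≤ C)
    (Y W : Ω → ℝ) (hY : MemLp Y 2 μ) (hW : MemLp W 2 μ)
    -- `(Y, W)` has a joint density with respect to Lebesgue measure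
    (hdens : ∃ f : ℝ × ℝ → ENNReal, Measurable f ∧
      μ.map (fun ω => (Y ω, W ω)) = (volume : Measure (ℝ × ℝ)).withDensity f)
    -- `ε ↦ F⁻¹_{Y+εW}(u)` is differentiable near `ε = 0` with bounded derivative
    (hdiff : ∃ δ > (0 : ℝ), ∃ K : ℝ, ∀ u ∈ Set.Ioo (0 : ℝ) 1, ∀ ε ∈ Set.Ioo (-δ) δ,
      ∃ d : ℝ, |d| ≤ K ∧
        HasDerivAt (fun e : ℝ => quantileFn (μ.map (fun ω => Y ω + e * W ω)) u) d ε) :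
    Filter.Tendsto
      (fun ε : ℝ => (distRM μ γ (fun ω => Y ω + ε * W ω) - distRM μ γ Y) / ε)
      (𝓝[≠] (0 : ℝ))
      (𝓝 (∫ ω, W ω * γ (cdf (μ.map Y) (Y ω)) ∂μ)) :=
  stmt14_general μ γ hγ_meas hγ_mono hγ_nonneg Y W hY hW hdens hdiff
end

section
/- Let φ be a self-financing strategy whose risk-to-go is bounded between positive constants c_R and c^R, and let ψ be the scaled strategy ψ_t = φ_t / R_t[φ_{t:T}]; then R_t[ψ_{t:T}] = 1 a.s. for all t, which follows from the recursion R_t[ψ] = ρ_t(φ_t^T ΔX_t / R_t[φ] + (R_{t+1}[φ]/R_t[φ]) · (φ_t^T X_{t+1})/(φ_{t+1}^T X_{t+1})) = (1/R_t[φ]) ρ_t(φ_t^T ΔX_t + R_{t+1}[φ]) = 1. -/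
open MeasureTheory

/-- One-step unfolding of `riskToGo` for `t ≤ T`. -/
lemma riskToGo_succ {Ω : Type*} {n : ℕ} (ρ : ℕ → (Ω → ℝ) → Ω → ℝ)
    (X θ : ℕ → Ω → Fin n → ℝ) {T t : ℕ} (h : t ≤ T) :
    riskToGo ρ X θ T t = ρ t (fun ω =>
      (∑ i, θ t ω i * (X t ω i - X (t + 1) ω i)) +
        wgt X θ t ω * riskToGo ρ X θ T (t + 1) ω) := by
  unfold riskToGo
  rw [show T + 1 - t = (T + 1 - (t + 1)) + 1 by omega]
  rfl

/-- `riskToGo` vanishes at `T + 1`. -/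
lemma riskToGo_top {Ω : Type*} {n : ℕ} (ρ : ℕ → (Ω → ℝ) → Ω → ℝ)
    (X θ : ℕ → Ω → Fin n → ℝ) (T : ℕ) :
    riskToGo ρ X θ T (T + 1) = fun _ => 0 := by
  unfold riskToGo
  rw [Nat.sub_self]
  rfl

/-- If `φ` is a self-financing strategy whose risk-to-go is bounded between positive
constants, then the scaled strategy `ψ_t = φ_t / R_t[φ_{t:T}]` has risk-to-go identically
equal to `1`. -/
theorem stmt18 {Ω : Type*} {m : MeasurableSpace Ω} {n T : ℕ}
    (ℱ : ℕ → MeasurableSpace Ω) (hℱ : Monotone ℱ)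
    (ρ : ℕ → (Ω → ℝ) → Ω → ℝ)
    (hρhom : ∀ (s : ℕ) (lam : Ω → ℝ), Measurable[ℱ s] lam →
      (∃ M : ℝ, ∀ ω, lam ω ≤ M) → (∀ ω, 0 < lam ω) →
      ∀ Z : Ω → ℝ, ρ s (fun ω => lam ω * Z ω) = fun ω => lam ω * ρ s Z ω)
    (X φ : ℕ → Ω → Fin n → ℝ)
    (hφpos : ∀ s ω i, 0 < φ s ω i) (hXpos : ∀ s ω i, 0 < X s ω i)
    -- `φ` is self-financing (so `w_t^φ = 1`)
    (hSF : ∀ t < T, ∀ ω, ∑ i, (φ (t + 1) ω i - φ t ω i) * X (t + 1) ω i = 0)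
    -- the risk-to-go of `φ` is bounded between positive constants
    (cR cRupper : ℝ) (hcR : 0 < cR)
    (hbounds : ∀ t ≤ T, ∀ ω,
      cR ≤ riskToGo ρ X φ T t ω ∧ riskToGo ρ X φ T t ω ≤ cRupper)
    -- the risk-to-go of `φ` is adapted
    (hRad : ∀ t ≤ T, Measurable[ℱ t] (riskToGo ρ X φ T t)) :
    ∀ t ≤ T, ∀ ω,
      riskToGo ρ X (fun s ω' i => φ s ω' i / riskToGo ρ X φ T s ω') T t ω = 1 := by
  set R := riskToGo ρ X φ T with hRdef
  set ψ : ℕ → Ω → Fin n → ℝ := fun s ω' i => φ s ω' i / R s ω' with hψdef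
  have hRpos : ∀ t ≤ T, ∀ ω, 0 < R t ω := fun t ht ω =>
    lt_of_lt_of_le hcR (hbounds t ht ω).1
  -- key step: if the weighted tail terms match up to the factor `(R t ω)⁻¹`,
  -- then `riskToGo` of `ψ` at `t` equals `1`.
  have key : ∀ t, ∀ ht : t ≤ T,
      (∀ ω, wgt X ψ t ω * riskToGo ρ X ψ T (t + 1) ω
          = (R t ω)⁻¹ * (wgt X φ t ω * R (t + 1) ω)) →
      ∀ ω, riskToGo ρ X ψ T t ω = 1 := by
    intro t ht hw ω
    have hR0 : ∀ ω', R t ω' ≠ 0 := fun ω' => (hRpos t ht ω').ne'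
    rw [riskToGo_succ ρ X ψ ht]
    have hfun : (fun ω' =>
        (∑ i, ψ t ω' i * (X t ω' i - X (t + 1) ω' i)) +
          wgt X ψ t ω' * riskToGo ρ X ψ T (t + 1) ω')
        = fun ω' => (R t ω')⁻¹ *
          ((∑ i, φ t ω' i * (X t ω' i - X (t + 1) ω' i)) +
            wgt X φ t ω' * R (t + 1) ω') := by
      funext ω'
      have hsum : (∑ i, ψ t ω' i * (X t ω' i - X (t + 1) ω' i))
          = (R t ω')⁻¹ * ∑ i, φ t ω' i * (X t ω' i - X (t + 1) ω' i) := by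
        rw [Finset.mul_sum]
        refine Finset.sum_congr rfl fun i _ => ?_
        simp [hψdef, div_eq_inv_mul, mul_assoc]
      rw [hsum, hw ω']
      ring
    rw [hfun, hρhom t (fun ω' => (R t ω')⁻¹) (hRad t ht).inv
      ⟨cR⁻¹, fun ω' => inv_anti₀ hcR (hbounds t ht ω').1⟩
      (fun ω' => inv_pos.mpr (hRpos t ht ω'))]
    have hrec := congrFun (riskToGo_succ ρ X φ ht) ω
    simp only [← hRdef] at hrec
    simp only [← hrec]
    exact inv_mul_cancel₀ (hR0 ω)
  -- the terminal case `t = T`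
  have hbase : ∀ ω, riskToGo ρ X ψ T T ω = 1 := by
    refine key T le_rfl fun ω => ?_
    have h1 : riskToGo ρ X ψ T (T + 1) ω = 0 := congrFun (riskToGo_top ρ X ψ T) ω
    have h2 : R (T + 1) ω = 0 := congrFun (riskToGo_top ρ X φ T) ω
    rw [h1, h2]
    ring
  -- backward induction
  have main : ∀ d t, t ≤ T → T - t ≤ d → ∀ ω, riskToGo ρ X ψ T t ω = 1 := by
    intro d
    induction d with
    | zero =>
      intro t ht hd
      have : t = T := by omega
      subst this
      exact hbase
    | succ d ih =>
      intro t ht hd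
      rcases eq_or_lt_of_le ht with rfl | hlt
      · exact hbase
      · refine key t ht fun ω => ?_
        have hIH : riskToGo ρ X ψ T (t + 1) ω = 1 := ih (t + 1) hlt (by omega) ω
        rw [hIH, mul_one]
        have hRt : R t ω ≠ 0 := (hRpos t ht ω).ne'
        have hRt1 : R (t + 1) ω ≠ 0 := (hRpos (t + 1) hlt ω).ne'
        have ha : (∑ i, ψ t ω i * X (t + 1) ω i)
            = (∑ i, φ t ω i * X (t + 1) ω i) / R t ω := by
          rw [Finset.sum_div]
          refine Finset.sum_congr rfl fun i _ => ?_
          simp [hψdef, div_mul_eq_mul_div]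
        have hb : (∑ i, ψ (t + 1) ω i * X (t + 1) ω i)
            = (∑ i, φ (t + 1) ω i * X (t + 1) ω i) / R (t + 1) ω := by
          rw [Finset.sum_div]
          refine Finset.sum_congr rfl fun i _ => ?_
          simp [hψdef, div_mul_eq_mul_div]
        have hself : (∑ i, φ (t + 1) ω i * X (t + 1) ω i)
            = ∑ i, φ t ω i * X (t + 1) ω i := by
          have h := hSF t hlt ω
          have : (∑ i, φ (t + 1) ω i * X (t + 1) ω i)
              - ∑ i, φ t ω i * X (t + 1) ω i = 0 := by
            rw [← Finset.sum_sub_distrib]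
            simpa [sub_mul] using h
          linarith
        unfold wgt
        rw [ha, hb, hself]
        set a := ∑ i, φ t ω i * X (t + 1) ω i with hadef
        rcases eq_or_ne a 0 with h0 | h0
        · simp [h0]
        · field_simp
  exact fun t ht ω => main (T - t) t ht le_rfl ω
end
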